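/- arXiv:1007.3543 — 4 statements merged into one kernel-verified Lean document; each statement's English description precedes it below -/
import Mathlib

section
/- Let (X,ℱ,𝒞) and (X',ℱ',𝒞') be Frölicher spaces, with natural diffeologies 𝒫(ℱ) and 𝒫(ℱ'). A map f : X → X' is smooth in the sense of Frölicher if and only if it is smooth as a map between the diffeological spaces (X,𝒫(ℱ)) and (X',𝒫(ℱ')). -/
open Set

/-- Euclidean space `ℝⁿ`. -/
abbrev Eucl (n : ℕ) : Type := EuclideanSpace ℝ (Fin n)

/-- A system of parametrizations ("plots") on `X`: for each `n`, a predicate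
`P O f` read as: the restriction of `f : ℝⁿ → X` to the domain `O ⊆ ℝⁿ` is a plot. -/
abbrev PlotsOn (X : Type*) : Type _ := ∀ ⦃n : ℕ⦄, Set (Eucl n) → (Eucl n → X) → Prop

/-- `P` is a diffeology on `X` (Souriau). -/
structure IsDiffeology {X : Type*} (P : PlotsOn X) : Prop where
  isOpen_dom : ∀ {n : ℕ} {O : Set (Eucl n)} {f : Eucl n → X}, P O f → IsOpen O
  congr : ∀ {n : ℕ} {O : Set (Eucl n)} {f g : Eucl n → X}, Set.EqOn f g O → P O f → P O g
  const_mem : ∀ {n : ℕ} {O : Set (Eucl n)}, IsOpen O → ∀ x : X, P O fun _ => x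
  locality : ∀ {n : ℕ} (S : Set (Set (Eucl n))) (f : Eucl n → X),
      (∀ O ∈ S, P O f) → P (⋃₀ S) f
  smooth_comp : ∀ {p q : ℕ} {O : Set (Eucl p)} {O' : Set (Eucl q)}
      {f : Eucl p → X} {g : Eucl q → Eucl p},
      P O f → IsOpen O' → ContDiffOn ℝ (⊤ : ℕ∞) g O' → Set.MapsTo g O' O → P O' (f ∘ g)

/-- Smooth maps between diffeological spaces. -/
def DSmooth {X X' : Type*} (P : PlotsOn X) (P' : PlotsOn X') (φ : X → X') : Prop :=
  ∀ {n : ℕ} {O : Set (Eucl n)} {p : Eucl n → X}, P O p → P' O (φ ∘ p)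

/-- Frölicher space structure on `X`. -/
structure IsFrolicher {X : Type*} (F : Set (X → ℝ)) (C : Set (ℝ → X)) : Prop where
  mem_F_iff : ∀ f : X → ℝ, f ∈ F ↔ ∀ c ∈ C, ContDiff ℝ (⊤ : ℕ∞) (f ∘ c)
  mem_C_iff : ∀ c : ℝ → X, c ∈ C ↔ ∀ f ∈ F, ContDiff ℝ (⊤ : ℕ∞) (f ∘ c)

/-- Smooth maps between Frölicher spaces. -/
def FSmooth {X X' : Type*} (F : Set (X → ℝ)) (C : Set (ℝ → X))
    (F' : Set (X' → ℝ)) (_C' : Set (ℝ → X')) (φ : X → X') : Prop :=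
  ∀ f' ∈ F', ∀ c ∈ C, ContDiff ℝ (⊤ : ℕ∞) (f' ∘ φ ∘ c)

/-- The natural diffeology `𝒫(ℱ)` of a Frölicher space. -/
def natPlots {X : Type*} (F : Set (X → ℝ)) : PlotsOn X :=
  fun _n O p => IsOpen O ∧ ∀ f ∈ F, ContDiffOn ℝ (⊤ : ℕ∞) (f ∘ p) O

/-- Contours generated by a family of functions `Fg`. -/
def genC {X : Type*} (Fg : Set (X → ℝ)) : Set (ℝ → X) :=
  {c | ∀ f ∈ Fg, ContDiff ℝ (⊤ : ℕ∞) (f ∘ c)}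

/-- Functions of the Frölicher structure generated by a family of functions `Fg`. -/
def genF {X : Type*} (Fg : Set (X → ℝ)) : Set (X → ℝ) :=
  {f | ∀ c ∈ genC Fg, ContDiff ℝ (⊤ : ℕ∞) (f ∘ c)}

/-- A map between Frölicher spaces is smooth in the sense of Frölicher
if and only if it is smooth for the underlying (natural) diffeologies. -/
theorem frolicherSmooth_iff_diffeologySmooth
    {X X' : Type*} {F : Set (X → ℝ)} {C : Set (ℝ → X)}
    {F' : Set (X' → ℝ)} {C' : Set (ℝ → X')}
    (hX : IsFrolicher F C) (hX' : IsFrolicher F' C') (φ : X → X') :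
    FSmooth F C F' C' φ ↔ DSmooth (natPlots F) (natPlots F') φ := by
  constructor
  · intro hφ n O p hp
    refine ⟨hp.1, fun f' hf' => ?_⟩
    have hmem : (f' ∘ φ) ∈ F := by
      rw [hX.mem_F_iff]
      intro c hc
      exact hφ f' hf' c hc
    exact hp.2 _ hmem
  · intro hφ f' hf' c hc
    set π : Eucl 1 → ℝ := fun x => x 0 with hπ
    have hπs : ContDiff ℝ (⊤ : ℕ∞) π := (EuclideanSpace.proj (0 : Fin 1) : Eucl 1 →L[ℝ] ℝ).contDiff
    have hplot : natPlots F (Set.univ : Set (Eucl 1)) (c ∘ π) := by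
      refine ⟨isOpen_univ, fun f hf => ?_⟩
      have : ContDiff ℝ (⊤ : ℕ∞) ((f ∘ c) ∘ π) := by
        have hfc : ContDiff ℝ (⊤ : ℕ∞) (f ∘ c) := (hX.mem_C_iff c).mp hc f hf
        exact hfc.comp hπs
      exact this.contDiffOn
    have h2 := hφ hplot
    have h3 : ContDiffOn ℝ (⊤ : ℕ∞) (f' ∘ (φ ∘ (c ∘ π))) Set.univ := h2.2 f' hf'
    have h4 : ContDiff ℝ (⊤ : ℕ∞) (f' ∘ (φ ∘ (c ∘ π))) := contDiffOn_univ.mp h3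
    set e : ℝ → Eucl 1 := fun t => (EuclideanSpace.equiv (Fin 1) ℝ).symm (fun _ => t) with he
    have hes : ContDiff ℝ (⊤ : ℕ∞) e :=
      (EuclideanSpace.equiv (Fin 1) ℝ).symm.contDiff.comp
        (contDiff_pi.mpr fun _ => contDiff_id)
    have hkey : (f' ∘ (φ ∘ (c ∘ π))) ∘ e = f' ∘ φ ∘ c := by
      funext t
      simp [he, hπ, Function.comp]
    have := h4.comp hes
    rw [hkey] at this
    exact this
end

section
/- Let {(X_α,ℱ_α,𝒞_α)}_{α∈Λ} be a family of Frölicher spaces, totally ordered for inclusion, such that whenever X_α ⊆ X_β the inclusion is smooth, and let 𝒫_α denote the natural diffeologies. Then X = ⋂_{α∈Λ} X_α carries a natural Frölicher structure whose set of contours is 𝒞 = ⋂_{α∈Λ} 𝒞_α, these contours are exactly the 1-plots of the diffeology 𝒫 = ⋂_{α∈Λ} 𝒫_α, and this Frölicher structure is generated by the family of functions ⋃_{α∈Λ} ℱ_α∘f_α, where f_α : X → X_α are the inclusions. -/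
open Set

lemma contDiff_iff_eucl1 {X : Type*} (c : ℝ → X) (f : X → ℝ) :
    ContDiff ℝ (⊤ : ℕ∞) (f ∘ c) ↔
      ContDiffOn ℝ (⊤ : ℕ∞) (fun z : Eucl 1 => f (c (z 0))) Set.univ := by
  constructor
  · intro h
    exact (h.comp ((EuclideanSpace.proj (0 : Fin 1) : Eucl 1 →L[ℝ] ℝ).contDiff)).contDiffOn
  · intro h
    have h' : ContDiff ℝ (⊤ : ℕ∞) (fun z : Eucl 1 => f (c (z 0))) := by
      rw [← contDiffOn_univ]; exact h
    have he : ContDiff ℝ (⊤ : ℕ∞) (fun t : ℝ => ((EuclideanSpace.equiv (Fin 1) ℝ).symm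
        (fun _ => t) : Eucl 1)) :=
      (EuclideanSpace.equiv (Fin 1) ℝ).symm.contDiff.comp
        (contDiff_pi.mpr fun _ => contDiff_id)
    exact h'.comp he

lemma isFrolicher_gen {X : Type*} (Fg : Set (X → ℝ)) :
    IsFrolicher (genF Fg) (genC Fg) := by
  constructor
  · intro f; exact Iff.rfl
  · intro c
    constructor
    · intro hc f hf; exact hf c hc
    · intro h f hf
      exact h f (fun c' hc' => hc' f hf)

/-- given a family of Frölicher spaces `(Xs α, F α, C α)`, totally ordered
for inclusion with smooth inclusions, the intersection `X = ⋂ α, Xs α` carries the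
Frölicher structure generated by the functions `f ∘ f_α` (`f ∈ F α`, `f_α` the
inclusions); its contours are exactly `⋂ α, C α`, and these are exactly the 1-plots
(defined on all of `ℝ`) of the intersected natural diffeologies `⋂ α, 𝒫(F α)`. -/
theorem projective_frolicher
    {U ι : Type*} [Nonempty ι] (Xs : ι → Set U)
    (F : ∀ α, Set (↥(Xs α) → ℝ)) (C : ∀ α, Set (ℝ → ↥(Xs α)))
    (hFr : ∀ α, IsFrolicher (F α) (C α))
    (horder : ∀ α β, Xs α ⊆ Xs β ∨ Xs β ⊆ Xs α)
    (hincl : ∀ α β (h : Xs α ⊆ Xs β), FSmooth (F α) (C α) (F β) (C β) (Set.inclusion h)) :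
    IsFrolicher
      (genF (⋃ α, (fun f : ↥(Xs α) → ℝ => f ∘ Set.inclusion (Set.iInter_subset Xs α)) '' F α))
      (genC (⋃ α, (fun f : ↥(Xs α) → ℝ => f ∘ Set.inclusion (Set.iInter_subset Xs α)) '' F α)) ∧
    genC (⋃ α, (fun f : ↥(Xs α) → ℝ => f ∘ Set.inclusion (Set.iInter_subset Xs α)) '' F α)
      = {c : ℝ → ↥(⋂ α, Xs α) | ∀ α, (Set.inclusion (Set.iInter_subset Xs α) ∘ c) ∈ C α} ∧
    (∀ c : ℝ → ↥(⋂ α, Xs α),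
      c ∈ genC (⋃ α, (fun f : ↥(Xs α) → ℝ => f ∘ Set.inclusion (Set.iInter_subset Xs α)) '' F α) ↔
        ∀ α, natPlots (F α) (Set.univ : Set (Eucl 1))
          (fun z => Set.inclusion (Set.iInter_subset Xs α) (c (z 0)))) := by
  have key : ∀ c : ℝ → ↥(⋂ α, Xs α),
      c ∈ genC (⋃ α, (fun f : ↥(Xs α) → ℝ =>
          f ∘ Set.inclusion (Set.iInter_subset Xs α)) '' F α) ↔
      ∀ α, ∀ f ∈ F α,
        ContDiff ℝ (⊤ : ℕ∞) (f ∘ (Set.inclusion (Set.iInter_subset Xs α) ∘ c)) := by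
    intro c
    constructor
    · intro hc α f hf
      exact hc _ (Set.mem_iUnion.mpr ⟨α, Set.mem_image_of_mem _ hf⟩)
    · intro h g hg
      obtain ⟨α, f, hf, rfl⟩ := Set.mem_iUnion.mp hg
      exact h α f hf
  refine ⟨isFrolicher_gen _, ?_, ?_⟩
  · ext c
    rw [Set.mem_setOf_eq, key c]
    exact forall_congr' fun α => ((hFr α).mem_C_iff _).symm
  · intro c
    rw [key c]
    refine forall_congr' fun α => ?_
    constructor
    · intro h
      exact ⟨isOpen_univ, fun f hf => (contDiff_iff_eucl1 c
        (f ∘ Set.inclusion (Set.iInter_subset Xs α))).mp (h f hf)⟩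
    · intro ⟨_, h⟩ f hf
      exact (contDiff_iff_eucl1 c (f ∘ Set.inclusion (Set.iInter_subset Xs α))).mpr (h f hf)
end

section
/- Let G be a regular Frölicher Lie group with Lie algebra 𝔤, and let 𝔤₁ be a Lie subalgebra of 𝔤. Let G₁ = Exp(C^∞([0,1];𝔤₁))(1) = {Exp(v)(1) : v ∈ C^∞([0,1];𝔤₁)}. If Ad_g(𝔤₁) = 𝔤₁ for every g ∈ G₁ ∪ G₁⁻¹, then G₁ is a subgroup of G, and hence a Frölicher subgroup of G for the trace Frölicher structure. -/
open Set

section FrolicherLieTheory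

variable {G : Type*} [Group G] {𝔤 : Type*} [LieRing 𝔤] [LieAlgebra ℝ 𝔤]

/-- A Frölicher Lie group: a group with a Frölicher structure for which
multiplication and inversion are smooth (equivalently, contours are stable under
pointwise multiplication and inversion). -/
structure IsFrolicherLieGroup (F : Set (G → ℝ)) (C : Set (ℝ → G)) : Prop where
  frolicher : IsFrolicher F C
  mul_mem : ∀ c ∈ C, ∀ c' ∈ C, (fun t => c t * c' t) ∈ C
  inv_mem : ∀ c ∈ C, (fun t => (c t)⁻¹) ∈ C

/-- A Frölicher vector space: a vector space with a Frölicher structure compatible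
with addition and scalar multiplication. -/
structure IsFrolicherVectorSpace (V : Type*) [AddCommGroup V] [Module ℝ V]
    (Fv : Set (V → ℝ)) (Cv : Set (ℝ → V)) : Prop where
  frolicher : IsFrolicher Fv Cv
  add_mem : ∀ c ∈ Cv, ∀ c' ∈ Cv, (fun t => c t + c' t) ∈ Cv
  smul_mem : ∀ a : ℝ → ℝ, ContDiff ℝ (⊤ : ℕ∞) a → ∀ c ∈ Cv, (fun t => a t • c t) ∈ Cv

/-- A regular Frölicher Lie group, presented through its data: the Frölicher group
structure `(F, C)` on `G`, the Frölicher vector space structure `(F𝔤, C𝔤)` on the Lie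
algebra `𝔤`, the adjoint action `Ad`, the right logarithmic derivative
`δ g = (dg/dt)·g⁻¹` of paths, and the evolution map `Exp` (paths on `[0,1]` are
modelled by (restrictions of) smooth paths defined on `ℝ`).  Regularity states that
`g = Exp v` iff `g 0 = 1` and `δ g = v` on `[0,1]`, and that `Exp` is smooth (tested
on smooth finite-dimensional families of paths, by cartesian closedness). -/
structure IsRegularFrolicherLieGroup
    (F : Set (G → ℝ)) (C : Set (ℝ → G)) (F𝔤 : Set (𝔤 → ℝ)) (C𝔤 : Set (ℝ → 𝔤))
    (Ad : G → 𝔤 →ₗ[ℝ] 𝔤) (δ : (ℝ → G) → ℝ → 𝔤) (Exp : (ℝ → 𝔤) → ℝ → G) : Prop where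
  toLieGroup : IsFrolicherLieGroup F C
  toVectorSpace : IsFrolicherVectorSpace 𝔤 F𝔤 C𝔤
  ad_one : Ad 1 = LinearMap.id
  ad_mul : ∀ g h : G, Ad (g * h) = (Ad g).comp (Ad h)
  ad_bracket : ∀ (g : G) (v w : 𝔤), Ad g ⁅v, w⁆ = ⁅Ad g v, Ad g w⁆
  ad_smooth : ∀ g : G, ∀ c ∈ C𝔤, (fun t => Ad g (c t)) ∈ C𝔤
  δ_const : ∀ g : G, δ (fun _ => g) = fun _ => 0
  δ_mul : ∀ g ∈ C, ∀ h ∈ C, ∀ t : ℝ,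
      δ (fun s => g s * h s) t = δ g t + Ad (g t) (δ h t)
  δ_reparam : ∀ g ∈ C, ∀ φ : ℝ → ℝ, ContDiff ℝ (⊤ : ℕ∞) φ → ∀ t : ℝ,
      δ (fun s => g (φ s)) t = deriv φ t • δ g (φ t)
  δ_smooth : ∀ g ∈ C, δ g ∈ C𝔤
  exp_mem : ∀ v ∈ C𝔤, Exp v ∈ C
  exp_zero : ∀ v ∈ C𝔤, Exp v 0 = 1
  exp_δ : ∀ v ∈ C𝔤, ∀ t ∈ Set.Icc (0:ℝ) 1, δ (Exp v) t = v t
  exp_unique : ∀ v ∈ C𝔤, ∀ g ∈ C, g 0 = 1 → (∀ t ∈ Set.Icc (0:ℝ) 1, δ g t = v t) →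
      ∀ t ∈ Set.Icc (0:ℝ) 1, g t = Exp v t
  exp_smooth : ∀ {n : ℕ} (u : Eucl n → ℝ → 𝔤),
      natPlots F𝔤 (Set.univ : Set (Eucl (n+1)))
        (fun z => u (WithLp.toLp 2 (fun i : Fin n => z i.castSucc)) (z (Fin.last n))) →
      natPlots F (Set.univ : Set (Eucl (n+1)))
        (fun z => Exp (u (WithLp.toLp 2 (fun i : Fin n => z i.castSucc))) (z (Fin.last n)))

end FrolicherLieTheory

/-- Theorem `Lie` of the paper: if `𝔤₁` is a Lie subalgebra of the Lie
algebra of a regular Frölicher Lie group `G`, `G₁ = Exp(C^∞([0,1];𝔤₁))(1)`, and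
`Ad_g 𝔤₁ = 𝔤₁` for every `g ∈ G₁ ∪ G₁⁻¹`, then `G₁` is a subgroup of `G`; hence,
equipped with the trace Frölicher structure (generated by the restrictions of the
functions of `F`), it is a Frölicher subgroup of `G` (multiplication and inversion
remain smooth for the trace structure). -/
theorem lie_subalgebra_gives_frolicher_subgroup
    {G : Type*} [Group G] {𝔤 : Type*} [LieRing 𝔤] [LieAlgebra ℝ 𝔤]
    {F : Set (G → ℝ)} {C : Set (ℝ → G)} {F𝔤 : Set (𝔤 → ℝ)} {C𝔤 : Set (ℝ → 𝔤)}
    {Ad : G → 𝔤 →ₗ[ℝ] 𝔤} {δ : (ℝ → G) → ℝ → 𝔤} {Exp : (ℝ → 𝔤) → ℝ → G}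
    (hG : IsRegularFrolicherLieGroup F C F𝔤 C𝔤 Ad δ Exp)
    (𝔤₁ : LieSubalgebra ℝ 𝔤)
    (G₁ : Set G)
    (hG₁ : G₁ = {g : G | ∃ v : ℝ → 𝔤, v ∈ C𝔤 ∧ (∀ t ∈ Set.Icc (0:ℝ) 1, v t ∈ 𝔤₁) ∧
        g = Exp v 1})
    (hAd : ∀ g ∈ G₁ ∪ G₁⁻¹, (Ad g) '' (𝔤₁ : Set 𝔤) = (𝔤₁ : Set 𝔤)) :
    ∃ H : Subgroup G, (H : Set G) = G₁ ∧
      (∀ c c' : ℝ → H,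
        c ∈ genC ((fun f : G → ℝ => f ∘ (Subtype.val : H → G)) '' F) →
        c' ∈ genC ((fun f : G → ℝ => f ∘ (Subtype.val : H → G)) '' F) →
        (fun t => c t * c' t) ∈ genC ((fun f : G → ℝ => f ∘ (Subtype.val : H → G)) '' F)) ∧
      (∀ c : ℝ → H,
        c ∈ genC ((fun f : G → ℝ => f ∘ (Subtype.val : H → G)) '' F) →
        (fun t => (c t)⁻¹) ∈ genC ((fun f : G → ℝ => f ∘ (Subtype.val : H → G)) '' F)) := by
  have hCmem := hG.toLieGroup.frolicher.mem_C_iff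
  have hC𝔤mem := hG.toVectorSpace.frolicher.mem_C_iff
  -- constant contours
  have hconstC : ∀ g : G, (fun _ : ℝ => g) ∈ C := by
    intro g; rw [hCmem]; intro f hf; exact contDiff_const
  have hconstC𝔤 : ∀ x : 𝔤, (fun _ : ℝ => x) ∈ C𝔤 := by
    intro x; rw [hC𝔤mem]; intro f hf; exact contDiff_const
  -- closure under smooth reparametrization
  have hreparamC : ∀ g ∈ C, ∀ φ : ℝ → ℝ, ContDiff ℝ (⊤ : ℕ∞) φ → (fun s => g (φ s)) ∈ C := by
    intro g hg φ hφ; rw [hCmem]; intro f hf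
    exact ((hCmem g).mp hg f hf).comp hφ
  have hreparamC𝔤 : ∀ v ∈ C𝔤, ∀ φ : ℝ → ℝ, ContDiff ℝ (⊤ : ℕ∞) φ → (fun s => v (φ s)) ∈ C𝔤 := by
    intro v hv φ hφ; rw [hC𝔤mem]; intro f hf
    exact ((hC𝔤mem v).mp hv f hf).comp hφ
  -- Ad preservation from hAd
  have hAd' : ∀ g ∈ G₁ ∪ G₁⁻¹, ∀ x ∈ 𝔤₁, Ad g x ∈ 𝔤₁ := by
    intro g hg x hx
    have h := hAd g hg
    show Ad g x ∈ (𝔤₁ : Set 𝔤)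
    rw [← h]
    exact Set.mem_image_of_mem _ hx
  -- Ad g⁻¹ inverts Ad g
  have hAdinv : ∀ (g : G) (x : 𝔤), Ad g⁻¹ (Ad g x) = x := by
    intro g x
    have h1 : Ad (g⁻¹ * g) = (Ad g⁻¹).comp (Ad g) := hG.ad_mul g⁻¹ g
    rw [inv_mul_cancel, hG.ad_one] at h1
    exact congrArg (fun L => L x) h1.symm
  -- key: Exp v t ∈ G₁ for t ∈ [0,1]
  have key : ∀ v ∈ C𝔤, (∀ t ∈ Set.Icc (0:ℝ) 1, v t ∈ 𝔤₁) →
      ∀ t ∈ Set.Icc (0:ℝ) 1, Exp v t ∈ G₁ := by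
    intro v hv hv1 t ht
    have hφ : ContDiff ℝ (⊤ : ℕ∞) (fun s : ℝ => t * s) := contDiff_const.mul contDiff_id
    have hw : (fun s => t • v (t * s)) ∈ C𝔤 :=
      hG.toVectorSpace.smul_mem (fun _ => t) contDiff_const _
        (hreparamC𝔤 v hv _ hφ)
    rw [hG₁]
    refine ⟨fun s => t • v (t * s), hw, ?_, ?_⟩
    · intro s hs
      exact 𝔤₁.smul_mem t (hv1 _ ⟨mul_nonneg ht.1 hs.1,
        mul_le_one₀ ht.2 hs.1 hs.2⟩)
    · have hg : (fun s => Exp v (t * s)) ∈ C := hreparamC _ (hG.exp_mem v hv) _ hφ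
      have h0 : Exp v (t * 0) = 1 := by rw [mul_zero]; exact hG.exp_zero v hv
      have hder : ∀ s : ℝ, deriv (fun s' : ℝ => t * s') s = t := by
        intro s
        have : HasDerivAt (fun s' : ℝ => t * s') t s := by
          simpa using (hasDerivAt_id s).const_mul t
        exact this.deriv
      have hδ : ∀ s ∈ Set.Icc (0:ℝ) 1, δ (fun s' => Exp v (t * s')) s = t • v (t * s) := by
        intro s hs
        rw [hG.δ_reparam (Exp v) (hG.exp_mem v hv) _ hφ s, hder]
        congr 1
        exact hG.exp_δ v hv (t * s) ⟨mul_nonneg ht.1 hs.1, mul_le_one₀ ht.2 hs.1 hs.2⟩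
      have := hG.exp_unique _ hw _ hg h0 hδ 1 ⟨zero_le_one, le_refl 1⟩
      rw [← this, mul_one]
  -- closure under multiplication
  have hmul : ∀ a ∈ G₁, ∀ b ∈ G₁, a * b ∈ G₁ := by
    intro a ha b hb
    rw [hG₁] at ha hb ⊢
    obtain ⟨v, hv, hv1, rfl⟩ := ha
    obtain ⟨w, hw, hw1, rfl⟩ := hb
    set h : ℝ → G := fun t => Exp v t * Exp w t with hh
    have hhC : h ∈ C := hG.toLieGroup.mul_mem _ (hG.exp_mem v hv) _ (hG.exp_mem w hw)
    have hh0 : h 0 = 1 := by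
      simp only [hh, hG.exp_zero v hv, hG.exp_zero w hw, one_mul]
    have hu : δ h ∈ C𝔤 := hG.δ_smooth h hhC
    have hu1 : ∀ t ∈ Set.Icc (0:ℝ) 1, δ h t ∈ 𝔤₁ := by
      intro t ht
      have hδm := hG.δ_mul _ (hG.exp_mem v hv) _ (hG.exp_mem w hw) t
      have : δ h t = v t + Ad (Exp v t) (w t) := by
        rw [hh, hδm, hG.exp_δ v hv t ht, hG.exp_δ w hw t ht]
      rw [this]
      exact 𝔤₁.add_mem (hv1 t ht)
        (hAd' _ (Set.mem_union_left _ (key v hv hv1 t ht)) _ (hw1 t ht))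
    have hfin := hG.exp_unique _ hu h hhC hh0 (fun t _ => rfl) 1 ⟨zero_le_one, le_refl 1⟩
    exact ⟨δ h, hu, hu1, hfin⟩
  -- closure under inversion
  have hinv : ∀ a ∈ G₁, a⁻¹ ∈ G₁ := by
    intro a ha
    rw [hG₁] at ha ⊢
    obtain ⟨v, hv, hv1, rfl⟩ := ha
    set h : ℝ → G := fun t => (Exp v t)⁻¹ with hh
    have hhC : h ∈ C := hG.toLieGroup.inv_mem _ (hG.exp_mem v hv)
    have hh0 : h 0 = 1 := by simp only [hh, hG.exp_zero v hv, inv_one]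
    have hu : δ h ∈ C𝔤 := hG.δ_smooth h hhC
    have hδh : ∀ t ∈ Set.Icc (0:ℝ) 1, δ h t = Ad ((Exp v t)⁻¹) (-(v t)) := by
      intro t ht
      have hδm := hG.δ_mul _ (hG.exp_mem v hv) h hhC t
      have hone : (fun s => Exp v s * h s) = fun _ => (1:G) := by
        funext s; simp [hh]
      rw [hone, hG.δ_const 1] at hδm
      have h2 : Ad (Exp v t) (δ h t) = -(v t) := by
        have := hδm.symm
        rw [hG.exp_δ v hv t ht] at this
        linear_combination (norm := module) this
      rw [← h2, hAdinv]
    have hu1 : ∀ t ∈ Set.Icc (0:ℝ) 1, δ h t ∈ 𝔤₁ := by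
      intro t ht
      rw [hδh t ht]
      refine hAd' _ (Set.mem_union_right _ ?_) _ (𝔤₁.neg_mem (hv1 t ht))
      rw [Set.mem_inv, inv_inv]
      exact key v hv hv1 t ht
    have hfin := hG.exp_unique _ hu h hhC hh0 (fun t _ => rfl) 1 ⟨zero_le_one, le_refl 1⟩
    exact ⟨δ h, hu, hu1, hfin⟩
  -- identity
  have hone : (1:G) ∈ G₁ := by
    rw [hG₁]
    refine ⟨fun _ => 0, hconstC𝔤 0, fun t _ => 𝔤₁.zero_mem, ?_⟩
    have h0 : (fun _ : ℝ => (1:G)) 0 = 1 := rfl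
    have hδ : ∀ t ∈ Set.Icc (0:ℝ) 1, δ (fun _ => (1:G)) t = (fun _ : ℝ => (0:𝔤)) t := by
      intro t _; rw [hG.δ_const 1]
    exact hG.exp_unique _ (hconstC𝔤 0) _ (hconstC 1) h0 hδ 1 ⟨zero_le_one, le_refl 1⟩
  -- build the subgroup
  let H : Subgroup G :=
    { carrier := G₁
      one_mem' := hone
      mul_mem' := fun ha hb => hmul _ ha _ hb
      inv_mem' := fun ha => hinv _ ha }
  refine ⟨H, rfl, ?_, ?_⟩
  · intro c c' hc hc'
    have hcG : (fun t => (c t : G)) ∈ C := by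
      rw [hCmem]; intro f hf
      exact hc _ ⟨f, hf, rfl⟩ 
    have hc'G : (fun t => (c' t : G)) ∈ C := by
      rw [hCmem]; intro f hf
      exact hc' _ ⟨f, hf, rfl⟩
    have hprod : (fun t => (c t : G) * (c' t : G)) ∈ C :=
      hG.toLieGroup.mul_mem _ hcG _ hc'G
    rintro f' ⟨f, hf, rfl⟩
    exact (hCmem _).mp hprod f hf
  · intro c hc
    have hcG : (fun t => (c t : G)) ∈ C := by
      rw [hCmem]; intro f hf
      exact hc _ ⟨f, hf, rfl⟩
    have hinvc : (fun t => ((c t : G))⁻¹) ∈ C :=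
      hG.toLieGroup.inv_mem _ hcG
    rintro f' ⟨f, hf, rfl⟩
    exact (hCmem _).mp hinvc f hf
end

section
/- Let π : X → M be a smooth surjective map of diffeological spaces equipped with a path-lifting L, let m ∈ M, and let γ, γ' ∈ 𝓛(m;M). Then γ ∼ γ' if and only if L_x(γ)(1) = L_x(γ')(1) for every x ∈ π⁻¹(m). Consequently, ∼ is an equivalence relation on 𝓛(m;M). -/
open Set

section PathLifting

/-- Reversal `γ⁻¹` of a path: `γ⁻¹(t) = γ(1 − t)`. -/
def pathInv {M : Type*} (γ : ℝ → M) : ℝ → M := fun t => γ (1 - t)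

/-- Concatenation `a ∨ b` of two paths (stationary at their endpoints):
traverse `b` first, then `a`. -/
noncomputable def pathConcat {M : Type*} (a b : ℝ → M) : ℝ → M :=
  fun t => if t ≤ 1 / 2 then b (2 * t) else a (2 * t - 1)

/-- A path (parametrized by `ℝ`, regarded through its restriction to `[0,1]`) is
stationary at its endpoints if it is constant near `0` and near `1`. -/
def StationaryPath {M : Type*} (γ : ℝ → M) : Prop :=
  (∃ ε > (0:ℝ), ∀ t ≤ ε, γ t = γ 0) ∧ (∃ ε > (0:ℝ), ∀ t ≥ 1 - ε, γ t = γ 1)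

/-- A smooth path on a diffeological space: a `1`-plot defined on all of `ℝ`. -/
def IsSmoothPath {M : Type*} (PM : PlotsOn M) (γ : ℝ → M) : Prop :=
  PM (Set.univ : Set (Eucl 1)) (fun z => γ (z 0))

/-- A smooth loop based at `m`, stationary at its endpoints. -/
def IsLoopAt {M : Type*} (PM : PlotsOn M) (m : M) (γ : ℝ → M) : Prop :=
  IsSmoothPath PM γ ∧ StationaryPath γ ∧ γ 0 = m ∧ γ 1 = m

/-- A path-lifting on the smooth surjection `π : X → M`: a smooth assignment
`(γ, x) ↦ L γ x` of paths of `X` to pairs of a smooth path `γ` of `M` and a point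
`x ∈ π⁻¹(γ 0)`, satisfying the axioms (i)–(vi) of Definition `pl` of the paper. -/
structure IsPathLifting {X M : Type*} (PX : PlotsOn X) (PM : PlotsOn M) (π : X → M)
    (L : (ℝ → M) → X → ℝ → X) : Prop where
  /-- `L` is smooth: it maps smooth families of (paths, initial points) to smooth
  families of paths (smoothness is tested on finite-dimensional plots, by
  cartesian closedness). -/
  smooth : ∀ {n : ℕ} {O : Set (Eucl n)} (γ : Eucl n → ℝ → M) (ξ : Eucl n → X),
      PM {z : Eucl (n+1) | (WithLp.toLp 2 (fun i : Fin n => z i.castSucc)) ∈ O}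
        (fun z => γ (WithLp.toLp 2 (fun i : Fin n => z i.castSucc)) (z (Fin.last n))) →
      PX O ξ → (∀ z ∈ O, π (ξ z) = γ z 0) →
      PX {z : Eucl (n+1) | (WithLp.toLp 2 (fun i : Fin n => z i.castSucc)) ∈ O}
        (fun z => L (γ (WithLp.toLp 2 (fun i : Fin n => z i.castSucc))) (ξ (WithLp.toLp 2 (fun i : Fin n => z i.castSucc))) (z (Fin.last n)))
  /-- liftings are smooth paths -/
  lift_isPath : ∀ γ x, IsSmoothPath PM γ → π x = γ 0 → IsSmoothPath PX (L γ x)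
  /-- (i) `π ∘ L_x(γ) = γ` -/
  lift_proj : ∀ γ x, IsSmoothPath PM γ → π x = γ 0 → ∀ t, π (L γ x t) = γ t
  /-- (ii) `L_x(γ' ∨ γ'') = L_{L_x(γ'')(1)}(γ') ∨ L_x(γ'')` -/
  lift_concat : ∀ γ' γ'' x, IsSmoothPath PM γ' → IsSmoothPath PM γ'' →
      StationaryPath γ' → StationaryPath γ'' → γ'' 1 = γ' 0 → π x = γ'' 0 →
      L (pathConcat γ' γ'') x = pathConcat (L γ' (L γ'' x 1)) (L γ'' x)
  /-- (iii) `L_x(γ ∘ g) = L_x(γ) ∘ g` for `g : [0,1] → [0,1]` smooth monotone -/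
  lift_reparam : ∀ γ x (g : ℝ → ℝ), IsSmoothPath PM γ → π x = γ 0 →
      ContDiff ℝ (⊤ : ℕ∞) g → Monotone g → Set.MapsTo g (Set.Icc (0:ℝ) 1) (Set.Icc (0:ℝ) 1) →
      L (γ ∘ g) x = (L γ x) ∘ g
  /-- (iv) `L_x(γ⁻¹ ∨ γ)(1) = x` -/
  lift_inv_concat : ∀ γ x, IsSmoothPath PM γ → StationaryPath γ → π x = γ 0 →
      L (pathConcat (pathInv γ) γ) x 1 = x
  /-- (v) `L_x(γ)(0) = x` -/
  lift_start : ∀ γ x, IsSmoothPath PM γ → π x = γ 0 → L γ x 0 = x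
  /-- (vi) if `L_x(γ)(1) = x` for some `x ∈ π⁻¹(γ 0)` then for every such `x` -/
  loop_exists_iff : ∀ γ, IsSmoothPath PM γ → γ 1 = γ 0 →
      (∃ x, π x = γ 0 ∧ L γ x 1 = x) → ∀ x, π x = γ 0 → L γ x 1 = x

/-- The relation `γ ∼ γ'` on loops based at `m`: the liftings from some point of the
fiber `π⁻¹(m)` have the same endpoint. -/
def simRel {X M : Type*} (L : (ℝ → M) → X → ℝ → X) (π : X → M) (m : M)
    (γ γ' : ℝ → M) : Prop :=
  ∃ x, π x = m ∧ L γ x 1 = L γ' x 1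

/-- Membership in `𝓛₀^L(m;M)`: a loop based at `m` whose lifting from some point
of the fiber is again a loop. -/
def IsNullLoop {X M : Type*} (L : (ℝ → M) → X → ℝ → X) (π : X → M)
    (PM : PlotsOn M) (m : M) (γ : ℝ → M) : Prop :=
  IsLoopAt PM m γ ∧ ∃ x, π x = m ∧ L γ x 1 = x

end PathLifting

section AuxPL
variable {M : Type*} {PM : PlotsOn M}

lemma pathInv_pathInv (γ : ℝ → M) : pathInv (pathInv γ) = γ := by
  funext t; simp [pathInv]

lemma pathConcat_one (a b : ℝ → M) : pathConcat a b 1 = a 1 := by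
  norm_num [pathConcat]

lemma pathConcat_zero (a b : ℝ → M) : pathConcat a b 0 = b 0 := by
  norm_num [pathConcat]

lemma stationary_pathInv {γ : ℝ → M} (h : StationaryPath γ) : StationaryPath (pathInv γ) := by
  obtain ⟨⟨ε1, hε1, h1⟩, ⟨ε2, hε2, h2⟩⟩ := h
  refine ⟨⟨ε2, hε2, fun t ht => ?_⟩, ⟨ε1, hε1, fun t ht => ?_⟩⟩
  · show γ (1 - t) = γ (1 - 0)
    rw [show (1:ℝ) - 0 = 1 from by norm_num]
    exact h2 _ (by linarith)
  · show γ (1 - t) = γ (1 - 1)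
    rw [show (1:ℝ) - 1 = 0 from by norm_num]
    exact h1 _ (by linarith)

lemma isSmoothPath_inv (hPM : IsDiffeology PM) {γ : ℝ → M}
    (h : IsSmoothPath PM γ) : IsSmoothPath PM (pathInv γ) := by
  have hg : ContDiffOn ℝ (⊤ : ℕ∞) (fun z : Eucl 1 => EuclideanSpace.single (0 : Fin 1) (1:ℝ) - z)
      univ := (contDiff_const.sub contDiff_id).contDiffOn
  have h2 := hPM.smooth_comp h isOpen_univ hg (mapsTo_univ _ _)
  refine hPM.congr (fun z _ => ?_) h2
  simp [Function.comp, pathInv, EuclideanSpace.single_apply]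

lemma isSmoothPath_concat (hPM : IsDiffeology PM) {a b : ℝ → M}
    (ha : IsSmoothPath PM a) (hb : IsSmoothPath PM b)
    (hsa : StationaryPath a) (hsb : StationaryPath b) (hab : b 1 = a 0) :
    IsSmoothPath PM (pathConcat a b) := by
  obtain ⟨⟨εa, hεa, hA⟩, _⟩ := hsa
  obtain ⟨_, ⟨εb, hεb, hB⟩⟩ := hsb
  set ε := min εa εb with hε
  have hε0 : (0:ℝ) < ε := lt_min hεa hεb
  set U : Set (Eucl 1) := {z | z 0 < 1/2 + ε/2} with hU
  set V : Set (Eucl 1) := {z | 1/2 - ε/2 < z 0} with hV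
  have hcont : Continuous fun z : Eucl 1 => z 0 :=
    (EuclideanSpace.proj (0 : Fin 1)).continuous
  have hUopen : IsOpen U := isOpen_lt hcont continuous_const
  have hVopen : IsOpen V := isOpen_lt continuous_const hcont
  have hgU : ContDiffOn ℝ (⊤ : ℕ∞) (fun z : Eucl 1 => (2:ℝ) • z) U :=
    (contDiff_id.const_smul (2:ℝ)).contDiffOn
  have hgV : ContDiffOn ℝ (⊤ : ℕ∞)
      (fun z : Eucl 1 => (2:ℝ) • z - EuclideanSpace.single (0 : Fin 1) (1:ℝ)) V :=
    ((contDiff_id.const_smul (2:ℝ)).sub contDiff_const).contDiffOn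
  have hPU : PM U fun z => pathConcat a b (z 0) := by
    refine hPM.congr (fun z hz => ?_) (hPM.smooth_comp hb hUopen hgU (mapsTo_univ _ _))
    simp only [Function.comp, PiLp.smul_apply, smul_eq_mul]
    have hz0 : z 0 < 1/2 + ε/2 := hz
    have e1 : ∀ h12 : ¬ z 0 ≤ 1/2, a (2 * z 0 - 1) = a 0 := fun h12 =>
      hA _ (by push_neg at h12; linarith [min_le_left εa εb])
    have e2 : ∀ h12 : ¬ z 0 ≤ 1/2, b (2 * z 0) = b 1 := fun h12 =>
      hB _ (by push_neg at h12; linarith [hεb])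
    simp only [pathConcat]
    split_ifs with h
    · rfl
    · rw [e1 h, e2 h, hab]
  have hPV : PM V fun z => pathConcat a b (z 0) := by
    refine hPM.congr (fun z hz => ?_) (hPM.smooth_comp ha hVopen hgV (mapsTo_univ _ _))
    simp only [Function.comp, PiLp.sub_apply, PiLp.smul_apply, smul_eq_mul,
      EuclideanSpace.single_apply, eq_self_iff_true, if_true]
    have hz0 : 1/2 - ε/2 < z 0 := hz
    have e1 : ∀ h12 : z 0 ≤ 1/2, a (2 * z 0 - 1) = a 0 := fun h12 =>
      hA _ (by linarith [hεa])
    have e2 : ∀ h12 : z 0 ≤ 1/2, b (2 * z 0) = b 1 := fun h12 =>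
      hB _ (by linarith [min_le_right εa εb])
    simp only [pathConcat]
    split_ifs with h
    · rw [e1 h, e2 h, hab]
    · rfl
  have hloc := hPM.locality {U, V} (fun z => pathConcat a b (z 0)) (by
    rintro O (rfl | rfl)
    · exact hPU
    · exact hPV)
  have hUV : ⋃₀ ({U, V} : Set (Set (Eucl 1))) = univ := by
    rw [sUnion_pair]
    ext z
    simp only [mem_union, mem_univ, iff_true, hU, hV, mem_setOf_eq]
    by_cases h : z 0 < 1/2 + ε/2
    · exact Or.inl h
    · exact Or.inr (by push_neg at h; linarith)
  rwa [hUV] at hloc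

end AuxPL

/-- `γ ∼ γ'` if and only if the liftings from every point of the fiber
have the same endpoint; consequently `∼` is an equivalence relation on `𝓛(m;M)`. -/
theorem simRel_iff_forall_and_equivalence
    {X M : Type*} {PX : PlotsOn X} {PM : PlotsOn M}
    (hPX : IsDiffeology PX) (hPM : IsDiffeology PM)
    {π : X → M} (hsurj : Function.Surjective π) (hπ : DSmooth PX PM π)
    {L : (ℝ → M) → X → ℝ → X} (hL : IsPathLifting PX PM π L) (m : M) :
    (∀ γ γ' : ℝ → M, IsLoopAt PM m γ → IsLoopAt PM m γ' →
      (simRel L π m γ γ' ↔ ∀ x, π x = m → L γ x 1 = L γ' x 1)) ∧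
    (∀ γ, IsLoopAt PM m γ → simRel L π m γ γ) ∧
    (∀ γ γ', IsLoopAt PM m γ → IsLoopAt PM m γ' →
      simRel L π m γ γ' → simRel L π m γ' γ) ∧
    (∀ γ γ' γ'', IsLoopAt PM m γ → IsLoopAt PM m γ' → IsLoopAt PM m γ'' →
      simRel L π m γ γ' → simRel L π m γ' γ'' → simRel L π m γ γ'') := by
  have main : ∀ γ γ' : ℝ → M, IsLoopAt PM m γ → IsLoopAt PM m γ' →
      (simRel L π m γ γ' ↔ ∀ x, π x = m → L γ x 1 = L γ' x 1) := by
    intro γ γ' hγ hγ'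
    obtain ⟨hsm, hst, h0, h1⟩ := hγ
    obtain ⟨hsm', hst', h0', h1'⟩ := hγ'
    constructor
    · rintro ⟨x₀, hx₀, hx₀eq⟩ x hx
      have hinv_sm : IsSmoothPath PM (pathInv γ') := isSmoothPath_inv hPM hsm'
      have hinv_st : StationaryPath (pathInv γ') := stationary_pathInv hst'
      have hinv0 : pathInv γ' 0 = m := by
        rw [show pathInv γ' 0 = γ' 1 from by norm_num [pathInv], h1']
      have hinv1 : pathInv γ' 1 = m := by
        rw [show pathInv γ' 1 = γ' 0 from by norm_num [pathInv], h0']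
      have key1 : ∀ y, π y = m → L (pathInv γ') (L γ' y 1) 1 = y := by
        intro y hy
        have h4 := hL.lift_inv_concat γ' y hsm' hst' (by rw [hy, h0'])
        have h2 := hL.lift_concat (pathInv γ') γ' y hinv_sm hsm' hinv_st hst'
          (by rw [h1', hinv0]) (by rw [hy, h0'])
        rw [h2, pathConcat_one] at h4
        exact h4
      have key2 : ∀ y, π y = m → L γ' (L (pathInv γ') y 1) 1 = y := by
        intro y hy
        have h4 := hL.lift_inv_concat (pathInv γ') y hinv_sm hinv_st (by rw [hy, hinv0])
        rw [pathInv_pathInv] at h4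
        have h2 := hL.lift_concat γ' (pathInv γ') y hsm' hinv_sm hst' hinv_st
          (by rw [hinv1, h0']) (by rw [hy, hinv0])
        rw [h2, pathConcat_one] at h4
        exact h4
      set σ := pathConcat (pathInv γ') γ with hσ
      have hσsm : IsSmoothPath PM σ :=
        isSmoothPath_concat hPM hinv_sm hsm hinv_st hst (by rw [h1, hinv0])
      have hσ0 : σ 0 = m := by rw [hσ, pathConcat_zero, h0]
      have hσ1 : σ 1 = m := by rw [hσ, pathConcat_one, hinv1]
      have hconc : ∀ x, π x = m → L σ x 1 = L (pathInv γ') (L γ x 1) 1 := by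
        intro x hx
        have h2 := hL.lift_concat (pathInv γ') γ x hinv_sm hsm hinv_st hst
          (by rw [h1, hinv0]) (by rw [hx, h0])
        rw [hσ, h2, pathConcat_one]
      have hex : ∃ x, π x = σ 0 ∧ L σ x 1 = x := by
        refine ⟨x₀, by rw [hx₀, hσ0], ?_⟩
        rw [hconc x₀ hx₀, hx₀eq, key1 x₀ hx₀]
      have hall := hL.loop_exists_iff σ hσsm (by rw [hσ1, hσ0]) hex
      have hx' : L σ x 1 = x := hall x (by rw [hx, hσ0])
      rw [hconc x hx] at hx'
      have hk := key2 (L γ x 1) (by rw [hL.lift_proj γ x hsm (by rw [hx, h0]) 1, h1])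
      rw [hx'] at hk
      exact hk.symm
    · intro h
      obtain ⟨x, hx⟩ := hsurj m
      exact ⟨x, hx, h x hx⟩
  refine ⟨main, ?_, ?_, ?_⟩
  · intro γ _
    obtain ⟨x, hx⟩ := hsurj m
    exact ⟨x, hx, rfl⟩
  · intro γ γ' hγ hγ' h
    obtain ⟨x, hx⟩ := hsurj m
    exact ⟨x, hx, ((main γ γ' hγ hγ').mp h x hx).symm⟩
  · intro γ γ' γ'' hγ hγ' hγ'' h h'
    obtain ⟨x, hx⟩ := hsurj m
    exact ⟨x, hx, ((main γ γ' hγ hγ').mp h x hx).trans ((main γ' γ'' hγ' hγ'').mp h' x hx)⟩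
end
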